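/- arXiv:2107.12484 — 5 statements merged into one kernel-verified Lean document; each statement's English description precedes it below -/
import Mathlib

section
/- If γ < 1 and (Δ, Λ) is a valid nonzero trade (Δ ≠ 0 or Λ − Δ ≠ 0 with Δ having a positive entry), then the post-trade trading function value strictly increases: φ(R + Δ − Λ) > φ(R). -/
theorem trade_increases_function_value_general {n : ℕ}
    (φ : (Fin n → ℝ) → ℝ)
    (hmono : ∀ x y : Fin n → ℝ, (∀ i, x i ≤ y i) → x ≠ y → φ x < φ y)
    (γ : ℝ) (hγ : γ ∈ Set.Ioo (0 : ℝ) 1)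
    (R Δ Λ : Fin n → ℝ)
    (hΔ : ∀ i, 0 ≤ Δ i)
    (hΔne : Δ ≠ 0)
    (hvalid : φ (R + γ • Δ - Λ) = φ R) :
    φ (R + Δ - Λ) > φ R := by
  have hΔpos : 0 < Δ := lt_of_le_of_ne hΔ hΔne.symm
  have hlt : R + γ • Δ - Λ < R + Δ - Λ :=
    sub_lt_sub_right (add_lt_add_right (smul_lt_of_lt_one_left hΔpos hγ.2) R) Λ
  rw [← hvalid]
  exact hmono _ _ hlt.le hlt.ne

/-- If `γ < 1` and `(Δ, Λ)` is a valid nonzero trade (with `Δ ≠ 0`), then the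
post-trade trading function value strictly increases: `φ(R + Δ − Λ) > φ(R)`. -/
theorem trade_increases_function_value {n : ℕ}
    (φ : (Fin n → ℝ) → ℝ)
    (hmono : ∀ x y : Fin n → ℝ, (∀ i, x i ≤ y i) → x ≠ y → φ x < φ y)
    (γ : ℝ) (hγ : γ ∈ Set.Ioo (0 : ℝ) 1)
    (R Δ Λ : Fin n → ℝ)
    (hR : ∀ i, 0 ≤ R i) (hΔ : ∀ i, 0 ≤ Δ i) (hΛ : ∀ i, 0 ≤ Λ i)
    (hΔne : Δ ≠ 0)
    (hvalid : φ (R + γ • Δ - Λ) = φ R) :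
    φ (R + Δ - Λ) > φ R :=
  trade_increases_function_value_general φ hmono γ hγ R Δ Λ hΔ hΔne hvalid
end

section
/- For a valid trade (Δ, Λ) with respect to a differentiable concave trading function φ, the function value increase satisfies φ(R⁺) ≥ φ(R) + (1−γ)·∇φ(R⁺)ᵀΔ, where R⁺ = R + Δ − Λ. -/
/-!
A concave function lies below its tangent planes. Take the tangent plane at `R⁺ = R + Δ - Λ` and
evaluate it at the valid trade point `R + γΔ - Λ`: there `φ` equals `φ R`, and the displacement
from `R⁺` is `(γ - 1)Δ`, so `φ R ≤ φ R⁺ + (γ - 1) ∇φ(R⁺)ᵀΔ`. The tangent-plane inequality itself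
comes from restricting `φ` to the segment, where the secant slope of a concave function is at most
its derivative at the left endpoint.
-/

open RealInnerProductSpace

theorem ConcaveOn.le_add_of_hasFDerivAt {E : Type*} [NormedAddCommGroup E] [NormedSpace ℝ E]
    {s : Set E} {f : E → ℝ} {f' : E →L[ℝ] ℝ} {x y : E} (hf : ConcaveOn ℝ s f)
    (hx : x ∈ s) (hy : y ∈ s) (hf' : HasFDerivAt f f' x) :
    f y ≤ f x + f' (y - x) := by
  let line : ℝ →ᵃ[ℝ] E := AffineMap.lineMap x y
  have hline : ConcaveOn ℝ (Set.Icc 0 1) (f ∘ line) :=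
    (hf.comp_affineMap line).subset
      (fun t ht => hf.1.lineMap_mem hx hy ⟨ht.1, ht.2⟩) (convex_Icc 0 1)
  have hderiv : HasDerivAt (f ∘ line) (f' (y - x)) 0 := by
    have hf'0 : HasFDerivAt f f' (line 0) := by simpa [line] using hf'
    exact hf'0.comp_hasDerivAt 0 AffineMap.hasDerivAt_lineMap
  have hslope := hline.slope_le_of_hasDerivAt (by simp) (by simp) zero_lt_one hderiv
  simp only [slope_def_field, Function.comp_apply, line, AffineMap.lineMap_apply_zero,
    AffineMap.lineMap_apply_one, sub_zero, div_one] at hslope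
  linarith

theorem ConcaveOn.le_add_inner_of_hasGradientAt {E : Type*} [NormedAddCommGroup E]
    [InnerProductSpace ℝ E] [CompleteSpace E] {s : Set E} {f : E → ℝ} {g x y : E}
    (hf : ConcaveOn ℝ s f) (hx : x ∈ s) (hy : y ∈ s) (hg : HasGradientAt f g x) :
    f y ≤ f x + ⟪g, y - x⟫ :=
  hf.le_add_of_hasFDerivAt hx hy hg.hasFDerivAt

theorem trade_function_value_increase_bound_general {n : ℕ}
    (φ : EuclideanSpace ℝ (Fin n) → ℝ)
    (g : EuclideanSpace ℝ (Fin n) → EuclideanSpace ℝ (Fin n))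
    (hconc : ConcaveOn ℝ {x : EuclideanSpace ℝ (Fin n) | ∀ i, 0 ≤ x i} φ)
    (hgrad : ∀ x, (∀ i, 0 ≤ x i) → HasGradientAt φ (g x) x)
    (γ : ℝ)
    (R Δ Λ : EuclideanSpace ℝ (Fin n))
    (hdom : ∀ i, 0 ≤ (R + γ • Δ - Λ) i)
    (hdom' : ∀ i, 0 ≤ (R + Δ - Λ) i)
    (hvalid : φ (R + γ • Δ - Λ) = φ R) :
    φ (R + Δ - Λ) ≥ φ R + (1 - γ) * ∑ i, g (R + Δ - Λ) i * Δ i := by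
  have hstep : R + γ • Δ - Λ - (R + Δ - Λ) = (γ - 1) • Δ := by module
  have hinner : ⟪g (R + Δ - Λ), (γ - 1) • Δ⟫ = (γ - 1) * ∑ i, g (R + Δ - Λ) i * Δ i := by
    rw [real_inner_smul_right]
    simp only [PiLp.inner_apply, RCLike.inner_apply, conj_trivial, mul_comm]
  have hbound := hconc.le_add_inner_of_hasGradientAt hdom' hdom (hgrad _ hdom')
  rw [hvalid, hstep, hinner] at hbound
  linarith

/-- For a valid trade `(Δ, Λ)` w.r.t. a differentiable concave trading function `φ`,
`φ(R⁺) ≥ φ(R) + (1−γ)·∇φ(R⁺)ᵀΔ`, where `R⁺ = R + Δ − Λ`. -/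
theorem trade_function_value_increase_bound {n : ℕ}
    (φ : EuclideanSpace ℝ (Fin n) → ℝ)
    (g : EuclideanSpace ℝ (Fin n) → EuclideanSpace ℝ (Fin n))
    (hconc : ConcaveOn ℝ {x : EuclideanSpace ℝ (Fin n) | ∀ i, 0 ≤ x i} φ)
    (hgrad : ∀ x, (∀ i, 0 ≤ x i) → HasGradientAt φ (g x) x)
    (hmono : ∀ x y : EuclideanSpace ℝ (Fin n), (∀ i, x i ≤ y i) → φ x ≤ φ y)
    (γ : ℝ) (hγ : γ ∈ Set.Ioc (0 : ℝ) 1)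
    (R Δ Λ : EuclideanSpace ℝ (Fin n))
    (hR : ∀ i, 0 ≤ R i) (hΔ : ∀ i, 0 ≤ Δ i) (hΛ : ∀ i, 0 ≤ Λ i)
    (hdom : ∀ i, 0 ≤ (R + γ • Δ - Λ) i)
    (hdom' : ∀ i, 0 ≤ (R + Δ - Λ) i)
    (hvalid : φ (R + γ • Δ - Λ) = φ R) :
    φ (R + Δ - Λ) ≥ φ R + (1 - γ) * ∑ i, g (R + Δ - Λ) i * Δ i :=
  trade_function_value_increase_bound_general φ g hconc hgrad γ R Δ Λ hdom hdom' hvalid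
end

section
/- The forward exchange function F of a CFMM is concave: if φ is concave and differentiable, and F(δ) is defined implicitly by φ(R + γδeᵢ − F(δ)eⱼ) = φ(R), then for all δ, δ′ ≥ 0 in the domain, F(δ′) ≤ F(δ) + F′(δ)(δ′ − δ), where F′(δ) = γ∇φ(R′)ᵢ/∇φ(R′)ⱼ with R′ = R + γδeᵢ − F(δ)eⱼ. -/
/-!
Write `R'(δ) = R + γδ eᵢ - F(δ) eⱼ`. All the points `R'(δ)` lie on the level set `{φ = φ(R)}`,
and for a concave `φ` every point of a superlevel set lies in the half-space cut out by the
tangent hyperplane: `0 ≤ ⟪∇φ(R'(δ)), R'(δ') - R'(δ)⟫ = γ(δ' - δ) ∂ᵢφ - (F(δ') - F(δ)) ∂ⱼφ`.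
Dividing by `∂ⱼφ > 0` gives the claimed tangent-line bound for `F`.
-/

open AffineMap InnerProductSpace

namespace ConcaveOn

variable {E : Type*} [NormedAddCommGroup E] {s : Set E} {f : E → ℝ} {x y : E}

theorem le_add_fderiv_sub [NormedSpace ℝ E] (hf : ConcaveOn ℝ s f) (hx : x ∈ s) (hy : y ∈ s)
    {f' : E →L[ℝ] ℝ} (hf' : HasFDerivAt f f' x) : f y ≤ f x + f' (y - x) := by
  -- Along the segment from `x` to `y`, the secant slope over `[0, 1]` is at most the slope at `0`.
  let L : ℝ →ᵃ[ℝ] E := lineMap x y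
  have hline : ConcaveOn ℝ (L ⁻¹' s) (f ∘ L) := hf.comp_affineMap L
  have hderiv : HasDerivAt (f ∘ L) (f' (y - x)) 0 :=
    hf'.comp_hasDerivAt_of_eq 0 hasDerivAt_lineMap (lineMap_apply_zero x y).symm
  have hslope := hline.slope_le_of_hasDerivAt (x := 0) (y := 1)
    (by simpa [L] using hx) (by simpa [L] using hy) zero_lt_one hderiv
  simp only [slope_def_field, Function.comp_apply, L, lineMap_apply_zero, lineMap_apply_one,
    sub_zero, div_one] at hslope
  linarith

variable [InnerProductSpace ℝ E] [CompleteSpace E]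

theorem le_add_inner_gradient_sub (hf : ConcaveOn ℝ s f) (hx : x ∈ s) (hy : y ∈ s) {G : E}
    (hG : HasGradientAt f G x) : f y ≤ f x + inner ℝ G (y - x) := by
  simpa only [toDual_apply_apply] using hf.le_add_fderiv_sub hx hy hG.hasFDerivAt

theorem inner_gradient_sub_nonneg (hf : ConcaveOn ℝ s f) (hx : x ∈ s) (hy : y ∈ s)
    (hxy : f x ≤ f y) {G : E} (hG : HasGradientAt f G x) : 0 ≤ inner ℝ G (y - x) := by
  linarith [hf.le_add_inner_gradient_sub hx hy hG]

end ConcaveOn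

theorem EuclideanSpace.inner_smul_single_sub_smul_single {ι : Type*} [Fintype ι] [DecidableEq ι]
    (G : EuclideanSpace ℝ ι) (a b : ℝ) (i j : ι) :
    inner ℝ G (a • EuclideanSpace.single i (1 : ℝ) - b • EuclideanSpace.single j (1 : ℝ)) =
      a * G i - b * G j := by
  simp [inner_sub_right, real_inner_smul_right, EuclideanSpace.inner_single_right]

theorem forward_exchange_concave_general {n : ℕ}
    (φ : EuclideanSpace ℝ (Fin n) → ℝ)
    (g : EuclideanSpace ℝ (Fin n) → EuclideanSpace ℝ (Fin n))
    (hconc : ConcaveOn ℝ {x : EuclideanSpace ℝ (Fin n) | ∀ i, 0 ≤ x i} φ)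
    (hgrad : ∀ x, (∀ i, 0 ≤ x i) → HasGradientAt φ (g x) x)
    (hgpos : ∀ x : EuclideanSpace ℝ (Fin n), (∀ i, 0 ≤ x i) → ∀ k, 0 < g x k)
    (γ : ℝ)
    (i j : Fin n)
    (R : EuclideanSpace ℝ (Fin n))
    (Dom : Set ℝ)
    (F : ℝ → ℝ)
    (hF : ∀ δ ∈ Dom, 0 ≤ F δ ∧
      (∀ k, 0 ≤ (R + (γ * δ) • EuclideanSpace.single i (1 : ℝ)
        - F δ • EuclideanSpace.single j (1 : ℝ)) k) ∧
      φ (R + (γ * δ) • EuclideanSpace.single i (1 : ℝ)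
        - F δ • EuclideanSpace.single j (1 : ℝ)) = φ R) :
    ∀ δ ∈ Dom, ∀ δ' ∈ Dom,
      F δ' ≤ F δ +
        (γ * g (R + (γ * δ) • EuclideanSpace.single i (1 : ℝ)
            - F δ • EuclideanSpace.single j (1 : ℝ)) i /
          g (R + (γ * δ) • EuclideanSpace.single i (1 : ℝ)
            - F δ • EuclideanSpace.single j (1 : ℝ)) j) * (δ' - δ) := by
  intro δ hδ δ' hδ'
  set x := R + (γ * δ) • EuclideanSpace.single i (1 : ℝ) - F δ • EuclideanSpace.single j (1 : ℝ)
  set y := R + (γ * δ') • EuclideanSpace.single i (1 : ℝ) - F δ' • EuclideanSpace.single j (1 : ℝ)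
  obtain ⟨-, hx, hφx⟩ := hF δ hδ
  obtain ⟨-, hy, hφy⟩ := hF δ' hδ'
  have hyx : y - x = (γ * δ' - γ * δ) • EuclideanSpace.single i (1 : ℝ)
      - (F δ' - F δ) • EuclideanSpace.single j (1 : ℝ) := by
    simp only [x, y]; module
  have htangent : 0 ≤ (γ * δ' - γ * δ) * g x i - (F δ' - F δ) * g x j := by
    rw [← EuclideanSpace.inner_smul_single_sub_smul_single, ← hyx]
    exact hconc.inner_gradient_sub_nonneg hx hy (hφx.trans hφy.symm).le (hgrad x hx)
  have hgj : 0 < g x j := hgpos x hx j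
  rw [div_mul_eq_mul_div, ← sub_le_iff_le_add', le_div_iff₀ hgj]
  linarith

/-- The forward exchange function `F` of a CFMM is concave: its first-order
Taylor approximation at any point is a global upper bound. -/
theorem forward_exchange_concave {n : ℕ}
    (φ : EuclideanSpace ℝ (Fin n) → ℝ)
    (g : EuclideanSpace ℝ (Fin n) → EuclideanSpace ℝ (Fin n))
    (hconc : ConcaveOn ℝ {x : EuclideanSpace ℝ (Fin n) | ∀ i, 0 ≤ x i} φ)
    (hgrad : ∀ x, (∀ i, 0 ≤ x i) → HasGradientAt φ (g x) x)
    (hmono : ∀ x y : EuclideanSpace ℝ (Fin n), (∀ i, x i ≤ y i) → x ≠ y → φ x < φ y)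
    (hgpos : ∀ x : EuclideanSpace ℝ (Fin n), (∀ i, 0 ≤ x i) → ∀ k, 0 < g x k)
    (γ : ℝ) (hγ : γ ∈ Set.Ioc (0 : ℝ) 1)
    (i j : Fin n) (hij : i ≠ j)
    (R : EuclideanSpace ℝ (Fin n)) (hR : ∀ k, 0 ≤ R k)
    (Dom : Set ℝ) (hDom : Dom ⊆ Set.Ici 0)
    (F : ℝ → ℝ)
    (hF : ∀ δ ∈ Dom, 0 ≤ F δ ∧
      (∀ k, 0 ≤ (R + (γ * δ) • EuclideanSpace.single i (1 : ℝ)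
        - F δ • EuclideanSpace.single j (1 : ℝ)) k) ∧
      φ (R + (γ * δ) • EuclideanSpace.single i (1 : ℝ)
        - F δ • EuclideanSpace.single j (1 : ℝ)) = φ R) :
    ∀ δ ∈ Dom, ∀ δ' ∈ Dom,
      F δ' ≤ F δ +
        (γ * g (R + (γ * δ) • EuclideanSpace.single i (1 : ℝ)
            - F δ • EuclideanSpace.single j (1 : ℝ)) i /
          g (R + (γ * δ) • EuclideanSpace.single i (1 : ℝ)
            - F δ • EuclideanSpace.single j (1 : ℝ)) j) * (δ' - δ) :=
  forward_exchange_concave_general φ g hconc hgrad hgpos γ i j R Dom F hF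
end

section
/- For the weighted geometric mean trading function φ(R) = ∏ₖ Rₖ^{wₖ} with positive weights summing to 1, the forward exchange function is F(δ) = Rⱼ(1 − Rᵢ^{wᵢ/wⱼ}/(Rᵢ + γδ)^{wᵢ/wⱼ}): i.e., λ = F(δ) satisfies φ(R + γδeᵢ − λeⱼ) = φ(R) and 0 ≤ λ < Rⱼ. -/
/-! Depositing `γδ` of asset `i` changes only the factors `Rᵢ^{wᵢ}` and `Rⱼ^{wⱼ}` of `φ`.
Scaling `Rⱼ` by `ρ = (Rᵢ / (Rᵢ + γδ))^{wᵢ/wⱼ}` multiplies `Rⱼ^{wⱼ}` by `(Rᵢ / (Rᵢ + γδ))^{wᵢ}`,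
which exactly cancels the growth of `Rᵢ^{wᵢ}`; and `0 < ρ ≤ 1` gives `0 ≤ Rⱼ(1 - ρ) < Rⱼ`. -/

open Real Finset

theorem Fintype.prod_eq_prod_of_pair {ι M : Type*} [Fintype ι] [DecidableEq ι] [CommMonoid M]
    {f g : ι → M} {i j : ι} (hij : i ≠ j) (hpair : f i * f j = g i * g j)
    (hoff : ∀ k, k ≠ i → k ≠ j → f k = g k) : ∏ k, f k = ∏ k, g k := by
  have hrest : ∏ k ∈ univ \ {i, j}, f k = ∏ k ∈ univ \ {i, j}, g k := by
    refine Finset.prod_congr rfl fun k hk => ?_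
    simp only [mem_sdiff, mem_insert, mem_singleton, not_or] at hk
    exact hoff k hk.2.1 hk.2.2
  rw [← prod_sdiff (subset_univ {i, j}), ← prod_sdiff (subset_univ {i, j}),
    prod_pair hij, prod_pair hij, hpair, hrest]

theorem Real.rpow_div_rpow_mem_Ioc {a b t : ℝ} (ha : 0 < a) (hab : a ≤ b) (ht : 0 ≤ t) :
    a ^ t / b ^ t ∈ Set.Ioc 0 1 :=
  have hbt : 0 < b ^ t := rpow_pos_of_pos (ha.trans_le hab) t
  ⟨div_pos (rpow_pos_of_pos ha t) hbt, (div_le_one hbt).2 (rpow_le_rpow ha.le hab ht)⟩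

theorem Real.rpow_mul_mul_rpow_div_rpow {a b x p q : ℝ} (ha : 0 ≤ a) (hb : 0 < b) (hx : 0 ≤ x)
    (hq : q ≠ 0) : b ^ p * (x * (a ^ (p / q) / b ^ (p / q))) ^ q = a ^ p * x ^ q := by
  have hab : 0 ≤ a / b := div_nonneg ha hb.le
  rw [← div_rpow ha hb.le, mul_rpow hx (rpow_nonneg hab _), ← rpow_mul hab,
    div_mul_cancel₀ _ hq, div_rpow ha hb.le, mul_left_comm,
    mul_div_cancel₀ _ (rpow_pos_of_pos hb p).ne', mul_comm]

theorem geometric_mean_forward_exchange_general {n : ℕ}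
    (γ : ℝ) (hγ : γ ∈ Set.Ioc (0 : ℝ) 1)
    (i j : Fin n) (hij : i ≠ j)
    (R : Fin n → ℝ) (hR : ∀ k, 0 < R k)
    (w : Fin n → ℝ) (hw : ∀ k, 0 < w k)
    (δ : ℝ) (hδ : 0 ≤ δ)
    (lam : ℝ) (hlam : lam = R j * (1 - R i ^ (w i / w j) / (R i + γ * δ) ^ (w i / w j))) :
    0 ≤ lam ∧ lam < R j ∧
    (∏ k, (R + (Pi.single i (γ * δ) : Fin n → ℝ) - (Pi.single j lam : Fin n → ℝ)) k ^ w k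
      = ∏ k, R k ^ w k) := by
  have hgrow : R i ≤ R i + γ * δ := le_add_of_nonneg_right (mul_nonneg hγ.1.le hδ)
  obtain ⟨hρ0, hρ1⟩ := rpow_div_rpow_mem_Ioc (hR i) hgrow (div_pos (hw i) (hw j)).le
  have hRj := hR j
  refine ⟨by rw [hlam]; nlinarith, by rw [hlam]; nlinarith, ?_⟩
  refine Fintype.prod_eq_prod_of_pair hij ?_ fun k hki hkj => ?_
  · have hj : R j - lam = R j * (R i ^ (w i / w j) / (R i + γ * δ) ^ (w i / w j)) := by
      rw [hlam]; ring
    simp only [Pi.sub_apply, Pi.add_apply, Pi.single_eq_same, Pi.single_eq_of_ne hij,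
      Pi.single_eq_of_ne hij.symm, sub_zero, add_zero, hj]
    exact rpow_mul_mul_rpow_div_rpow (hR i).le ((hR i).trans_le hgrow) hRj.le (hw j).ne'
  · simp [Pi.single_eq_of_ne hki, Pi.single_eq_of_ne hkj]

/-- For the weighted geometric mean trading function `φ(R) = ∏ₖ Rₖ^{wₖ}`, the
forward exchange function is `F(δ) = Rⱼ(1 − Rᵢ^{wᵢ/wⱼ}/(Rᵢ + γδ)^{wᵢ/wⱼ})`:
this value satisfies the exchange condition and lies in `[0, Rⱼ)`. -/
theorem geometric_mean_forward_exchange {n : ℕ}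
    (γ : ℝ) (hγ : γ ∈ Set.Ioc (0 : ℝ) 1)
    (i j : Fin n) (hij : i ≠ j)
    (R : Fin n → ℝ) (hR : ∀ k, 0 < R k)
    (w : Fin n → ℝ) (hw : ∀ k, 0 < w k) (hwsum : ∑ k, w k = 1)
    (δ : ℝ) (hδ : 0 ≤ δ)
    (lam : ℝ) (hlam : lam = R j * (1 - R i ^ (w i / w j) / (R i + γ * δ) ^ (w i / w j))) :
    0 ≤ lam ∧ lam < R j ∧
    (∏ k, (R + (Pi.single i (γ * δ) : Fin n → ℝ) - (Pi.single j lam : Fin n → ℝ)) k ^ w k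
      = ∏ k, R k ^ w k) :=
  geometric_mean_forward_exchange_general γ hγ i j hij R hR w hw δ hδ lam hlam
end

section
/- Liquidation value bound: if α > 0 satisfies φ(R + γΔ − αeₙ) = φ(R) with Δ ≥ 0, Δₙ = 0, then α ≤ γpᵀΔ where p = ∇φ(R)/∇φ(R)ₙ. -/
/-!
Concavity puts `φ` below its tangent plane at `R`. At the liquidated point `φ` takes the
value `φ R` again, so the gradient pairs nonnegatively with the displacement
`γ • Δ - α • eₙ`, i.e. `α ∇φ(R)ₙ ≤ γ ⟪∇φ(R), Δ⟫`.
-/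

theorem ConcaveOn.le_add_fderiv {E : Type*} [NormedAddCommGroup E] [NormedSpace ℝ E]
    {S : Set E} {φ : E → ℝ} (hφ : ConcaveOn ℝ S φ) {x y : E} (hx : x ∈ S) (hy : y ∈ S)
    {φ' : E →L[ℝ] ℝ} (hφ' : HasFDerivAt φ φ' x) :
    φ y ≤ φ x + φ' (y - x) := by
  have hline := hφ.comp_affineMap (AffineMap.lineMap (k := ℝ) x y)
  have hderiv : HasDerivAt (φ ∘ AffineMap.lineMap x y) (φ' (y - x)) (0 : ℝ) :=
    (by simpa using hφ' : HasFDerivAt φ φ' (AffineMap.lineMap x y (0 : ℝ))).comp_hasDerivAt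
      (0 : ℝ) AffineMap.hasDerivAt_lineMap
  have hslope := hline.slope_le_of_hasDerivAt (x := 0) (y := 1) (by simpa using hx)
    (by simpa using hy) one_pos hderiv
  simp only [slope_def_field, Function.comp_apply, AffineMap.lineMap_apply_zero,
    AffineMap.lineMap_apply_one, sub_zero, div_one] at hslope
  linarith

theorem ConcaveOn.le_add_inner_gradient {E : Type*} [NormedAddCommGroup E]
    [InnerProductSpace ℝ E] [CompleteSpace E] {S : Set E} {φ : E → ℝ} (hφ : ConcaveOn ℝ S φ)
    {x y : E} (hx : x ∈ S) (hy : y ∈ S) {g : E} (hg : HasGradientAt φ g x) :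
    φ y ≤ φ x + inner ℝ g (y - x) :=
  hφ.le_add_fderiv hx hy hg.hasFDerivAt

theorem EuclideanSpace.inner_smul_sub_smul_single {ι : Type*} [Fintype ι] [DecidableEq ι]
    (g Δ : EuclideanSpace ℝ ι) (γ α : ℝ) (i : ι) :
    inner ℝ g (γ • Δ - α • EuclideanSpace.single i 1) =
      γ * ∑ j, g j * Δ j - α * g i := by
  simp [inner_sub_right, inner_smul_right, PiLp.inner_apply, mul_comm]

theorem liquidation_value_bound_general {n : ℕ}
    (φ : EuclideanSpace ℝ (Fin (n + 1)) → ℝ)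
    (g : EuclideanSpace ℝ (Fin (n + 1)) → EuclideanSpace ℝ (Fin (n + 1)))
    (hconc : ConcaveOn ℝ {x : EuclideanSpace ℝ (Fin (n + 1)) | ∀ i, 0 ≤ x i} φ)
    (hgrad : ∀ x, (∀ i, 0 ≤ x i) → HasGradientAt φ (g x) x)
    (γ : ℝ)
    (R Δ : EuclideanSpace ℝ (Fin (n + 1)))
    (hR : ∀ i, 0 ≤ R i)
    (hgn : 0 < g R (Fin.last n))
    (α : ℝ)
    (hdom : ∀ i, 0 ≤ (R + γ • Δ - α • EuclideanSpace.single (Fin.last n) (1 : ℝ)) i)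
    (hvalid : φ (R + γ • Δ - α • EuclideanSpace.single (Fin.last n) (1 : ℝ)) = φ R) :
    α ≤ γ * ∑ i, (g R i / g R (Fin.last n)) * Δ i := by
  have hsuper := hconc.le_add_inner_gradient hR hdom (hgrad R hR)
  rw [hvalid, add_sub_assoc, add_sub_cancel_left,
    EuclideanSpace.inner_smul_sub_smul_single] at hsuper
  simp_rw [div_mul_eq_mul_div, ← Finset.sum_div, mul_div_assoc', le_div_iff₀ hgn]
  linarith

/-- Liquidation value bound: if `α > 0` satisfies `φ(R + γΔ − αeₙ) = φ(R)` with
`Δ ≥ 0`, `Δₙ = 0`, then `α ≤ γ·pᵀΔ` where `p = ∇φ(R)/∇φ(R)ₙ`. -/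
theorem liquidation_value_bound {n : ℕ}
    (φ : EuclideanSpace ℝ (Fin (n + 1)) → ℝ)
    (g : EuclideanSpace ℝ (Fin (n + 1)) → EuclideanSpace ℝ (Fin (n + 1)))
    (hconc : ConcaveOn ℝ {x : EuclideanSpace ℝ (Fin (n + 1)) | ∀ i, 0 ≤ x i} φ)
    (hgrad : ∀ x, (∀ i, 0 ≤ x i) → HasGradientAt φ (g x) x)
    (hmono : ∀ x y : EuclideanSpace ℝ (Fin (n + 1)), (∀ i, x i ≤ y i) → φ x ≤ φ y)
    (γ : ℝ) (hγ : γ ∈ Set.Ioc (0 : ℝ) 1)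
    (R Δ : EuclideanSpace ℝ (Fin (n + 1)))
    (hR : ∀ i, 0 ≤ R i) (hΔ : ∀ i, 0 ≤ Δ i) (hΔn : Δ (Fin.last n) = 0)
    (hgn : 0 < g R (Fin.last n))
    (α : ℝ) (hα : 0 < α)
    (hdom : ∀ i, 0 ≤ (R + γ • Δ - α • EuclideanSpace.single (Fin.last n) (1 : ℝ)) i)
    (hvalid : φ (R + γ • Δ - α • EuclideanSpace.single (Fin.last n) (1 : ℝ)) = φ R) :
    α ≤ γ * ∑ i, (g R i / g R (Fin.last n)) * Δ i :=
  liquidation_value_bound_general φ g hconc hgrad γ R Δ hR hgn α hdom hvalid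
end
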